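/- For every compact subset K of 𝕌ⁿ there exists a constant a > 0 such that |⟨ν−2ξ,ν⟩| ≥ a·⟨ν,ρ⟩² for all ξ ∈ K and all ν ∈ ℤⁿ with ν ≥ 0. -/

import Mathlib

open scoped BigOperators
open Finset Filter Topology

noncomputable section

namespace TodaBC

variable {n : ℕ}

/-- The bilinear pairing `⟨ξ,x⟩ = ∑_j ξ_j x_j` on `ℂⁿ`. -/
def pc (ξ x : Fin n → ℂ) : ℂ := ∑ j, ξ j * x j

/-- Complexification of an integer vector. -/
def zc (ν : Fin n → ℤ) : Fin n → ℂ := fun j => (ν j : ℂ)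

/-- Complexification of a real vector. -/
def cr (x : Fin n → ℝ) : Fin n → ℂ := fun j => (x j : ℂ)

/-- `ρ = (n, n-1, …, 1)` as a complex vector (0-indexed: `ρ_j = n - j`). -/
def rhoC (n : ℕ) : Fin n → ℂ := fun j => ((n - (j : ℕ) : ℕ) : ℂ)

/-- `ρ = (n, n-1, …, 1)` as a real vector. -/
def rhoR (n : ℕ) : Fin n → ℝ := fun j => ((n - (j : ℕ) : ℕ) : ℝ)

/-- `⟨ν,ρ⟩` for an integer vector `ν`. -/
def rp (ν : Fin n → ℤ) : ℤ := ∑ j, ν j * ((n : ℤ) - ((j : ℕ) : ℤ))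

/-- `ν ≥ 0` : all initial partial sums of `ν` are nonnegative. -/
def dominant (ν : Fin n → ℤ) : Prop := ∀ k : Fin n, 0 ≤ ∑ j ∈ Finset.Iic k, ν j

/-- The domain `𝕌ⁿ = {ξ ∈ ℂⁿ ∣ ⟨ν-2ξ,ν⟩ ≠ 0 for all ν > 0}`. -/
def Uset (n : ℕ) : Set (Fin n → ℂ) :=
  {ξ | ∀ ν : Fin n → ℤ, dominant ν → ν ≠ 0 → pc (zc ν - 2 • ξ) (zc ν) ≠ 0}

/-- Standard basis vector of `ℤⁿ` with (0-based) index `k`. -/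
def eZ (n : ℕ) (k : ℕ) : Fin n → ℤ := fun i => if (i : ℕ) = k then 1 else 0

/-- RHS of the Toda Harish-Chandra recurrence: `∑_{α ∈ S} a_α a_{ν-α}`. -/
def todaRHS (g : ℂ) (a : (Fin n → ℤ) → ℂ) (ν : Fin n → ℤ) : ℂ :=
  (∑ k ∈ Finset.range (n - 1), 2 * a (ν - (eZ n k - eZ n (k + 1))))
    + g * a (ν - eZ n (n - 1)) + (1 / 4) * a (ν - 2 • eZ n (n - 1))

/-- `a` is the family of Harish-Chandra coefficients `ν ↦ a_ν(ξ;g)`. -/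
def IsHC (g : ℂ) (ξ : Fin n → ℂ) (a : (Fin n → ℤ) → ℂ) : Prop :=
  a 0 = 1 ∧ (∀ ν, ¬ dominant ν → a ν = 0) ∧
    ∀ ν, dominant ν → ν ≠ 0 →
      a ν = (pc (zc ν - 2 • ξ) (zc ν))⁻¹ * todaRHS g a ν

/-- Term of the Harish-Chandra series: `a_ν e^{⟨ξ-ν,x⟩}`. -/
def hcTerm (a : (Fin n → ℤ) → ℂ) (ξ x : Fin n → ℂ) (ν : Fin n → ℤ) : ℂ :=
  a ν * Complex.exp (pc (ξ - zc ν) x)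

/-- The Toda + Morse potential `∑_{α ∈ S} a_α e^{-⟨α,x⟩}`. -/
def potential (n : ℕ) (g : ℂ) (x : Fin n → ℂ) : ℂ :=
  (∑ k ∈ Finset.range (n - 1), 2 * Complex.exp (- pc (zc (eZ n k - eZ n (k + 1))) x))
    + g * Complex.exp (- pc (zc (eZ n (n - 1))) x)
    + (1 / 4) * Complex.exp (- pc (zc (2 • eZ n (n - 1))) x)

/-- `∂²f/∂x_j²` evaluated at `x`. -/
def secondPartial (f : (Fin n → ℂ) → ℂ) (j : Fin n) (x : Fin n → ℂ) : ℂ :=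
  iteratedDeriv 2 (fun s => f (Function.update x j s)) (x j)

/-- `ℂⁿ_{reg,+}`. -/
def regPlus (n : ℕ) : Set (Fin n → ℂ) :=
  {ξ | (∀ j, ∀ m : ℤ, 0 < m → 2 * ξ j ≠ (m : ℂ)) ∧
    ∀ j k : Fin n, j < k → ∀ m : ℤ, 0 < m → ξ j + ξ k ≠ (m : ℂ) ∧ ξ j - ξ k ≠ (m : ℂ)}

/-- `ℂⁿ_{reg}`. -/
def regSet (n : ℕ) : Set (Fin n → ℂ) :=
  {ξ | (∀ j, ∀ m : ℤ, 2 * ξ j ≠ (m : ℂ)) ∧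
    ∀ j k : Fin n, j < k → ∀ m : ℤ, ξ j + ξ k ≠ (m : ℂ) ∧ ξ j - ξ k ≠ (m : ℂ)}

/-- `ℂⁿ_{reg,-}`. -/
def regMinus (n : ℕ) : Set (Fin n → ℂ) :=
  {ξ | (∀ j, ∀ m : ℤ, m ≤ 0 → 2 * ξ j ≠ (m : ℂ)) ∧
    ∀ j k : Fin n, j < k → ∀ m : ℤ, m ≤ 0 → ξ j + ξ k ≠ (m : ℂ) ∧ ξ j - ξ k ≠ (m : ℂ)}

/-- The condition `x_k - x_{k+1} ≥ R` for `k = 1,…,n` (with `x_{n+1} = 0`). -/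
def spaced (n : ℕ) (R : ℝ) (x : Fin n → ℝ) : Prop :=
  ∀ k : Fin n, (if h : (k : ℕ) + 1 < n then x ⟨(k : ℕ) + 1, h⟩ else 0) + R ≤ x k

/-- The Toda `c`-function `C(ξ;g)`. -/
def Cfun (g : ℂ) (ξ : Fin n → ℂ) : ℂ :=
  (∏ j, Complex.Gamma (2 * ξ j) / Complex.Gamma (1 / 2 + g + ξ j)) *
    ∏ j, ∏ k ∈ Finset.Ioi j, Complex.Gamma (ξ j + ξ k) * Complex.Gamma (ξ j - ξ k)

/-- Action of the signed permutation `(σ,ε)` on `ℂⁿ`: `(wξ)_j = ε_j ξ_{σ_j}`. -/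
def wAct (σ : Equiv.Perm (Fin n)) (ε : Fin n → Bool) (ξ : Fin n → ℂ) : Fin n → ℂ :=
  fun j => (if ε j then 1 else -1) * ξ (σ j)

/-- The hyperoctahedral Whittaker function `Φ_ξ(x;g) = ∑_{w ∈ W} C(wξ;g) φ_{wξ}(x;g)`,
built from an extension `F` of the fundamental Whittaker function. -/
def PhiOf (F : (Fin n → ℂ) → (Fin n → ℂ) → ℂ → ℂ) (g : ℂ) (ξ x : Fin n → ℂ) : ℂ :=
  ∑ σ : Equiv.Perm (Fin n), ∑ ε : Fin n → Bool,
    Cfun g (wAct σ ε ξ) * F (wAct σ ε ξ) x g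

/-- `F` is the holomorphic extension, to `ℂⁿ_{reg,+} × ℂⁿ × ℂ`, of the fundamental Whittaker
function attached to the coefficient family `a`. -/
def IsPhiExt (n : ℕ) (a : (Fin n → ℂ) → ℂ → (Fin n → ℤ) → ℂ)
    (F : (Fin n → ℂ) → (Fin n → ℂ) → ℂ → ℂ) : Prop :=
  DifferentiableOn ℂ (fun p : (Fin n → ℂ) × (Fin n → ℂ) × ℂ => F p.1 p.2.1 p.2.2)
      ((regPlus n) ×ˢ (Set.univ : Set (Fin n → ℂ)) ×ˢ (Set.univ : Set ℂ)) ∧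
    ∀ ξ ∈ Uset n ∩ regPlus n, ∀ x : Fin n → ℂ, ∀ g : ℂ,
      HasSum (fun ν : Fin n → ℤ => hcTerm (a ξ g) ξ x ν) (F ξ x g)

/-- Sign vector with value `+1` on `P`, `-1` on `M`, `0` elsewhere. -/
def es (P M : Finset (Fin n)) (j : Fin n) : ℂ :=
  if j ∈ P then 1 else if j ∈ M then -1 else 0

/-- The coefficient `V_{εJ}(ξ;g)` where `J = P ∪ M`, `ε = +1` on `P` and `-1` on `M`. -/
def Vco (g : ℂ) (ξ : Fin n → ℂ) (P M : Finset (Fin n)) : ℂ :=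
  (∏ j ∈ P ∪ M, (1 / 2 + g + es P M j * ξ j) / (2 * ξ j * (2 * ξ j + es P M j)))
    * (∏ j ∈ P ∪ M, ∏ k ∈ (P ∪ M)ᶜ, (ξ j ^ 2 - ξ k ^ 2)⁻¹)
    * ∏ j ∈ P ∪ M, ∏ j' ∈ (P ∪ M).filter (fun j' => j < j'),
        (es P M j * ξ j + es P M j' * ξ j')⁻¹ * (1 + es P M j * ξ j + es P M j' * ξ j')⁻¹

/-- The coefficient `U_{K,p}(ξ;g)`. -/
def Uco (g : ℂ) (ξ : Fin n → ℂ) (K : Finset (Fin n)) (p : ℕ) : ℂ :=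
  (-1 : ℂ) ^ (p * (p + 1) / 2) *
    ∑ P : Finset (Fin n), ∑ M : Finset (Fin n),
      if P ⊆ K ∧ M ⊆ K ∧ Disjoint P M ∧ P.card + M.card = p then
        (∏ i ∈ P ∪ M, (1 / 2 + g + es P M i * ξ i) / (2 * ξ i * (2 * ξ i + es P M i)))
          * (∏ i ∈ P ∪ M, ∏ k ∈ K \ (P ∪ M), (ξ i ^ 2 - ξ k ^ 2)⁻¹)
          * ∏ i ∈ P ∪ M, ∏ i' ∈ (P ∪ M).filter (fun i' => i < i'),
              (es P M i * ξ i + es P M i' * ξ i')⁻¹ *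
                (1 + es P M i * ξ i + es P M i' * ξ i')⁻¹
      else 0

/-- LHS of the dual difference equation of order `ℓ`, applied to a function `Φf` of the
spectral variable. -/
def diffLHS (g : ℂ) (ℓ : ℕ) (ξ : Fin n → ℂ) (Φf : (Fin n → ℂ) → ℂ) : ℂ :=
  ∑ P : Finset (Fin n), ∑ M : Finset (Fin n),
    if Disjoint P M ∧ P.card + M.card ≤ ℓ then
      Uco g ξ (P ∪ M)ᶜ (ℓ - (P.card + M.card)) * Vco g ξ P M * Φf (ξ + es P M)
    else 0

/-- The set of linear forms `ξ ↦ 2ξ_j`, `ξ ↦ ξ_j ± ξ_k` (`j < k`). -/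
def LinForms (n : ℕ) : Set ((Fin n → ℂ) → ℂ) :=
  {L | (∃ j, L = fun ξ => 2 * ξ j) ∨
    ∃ j k : Fin n, j < k ∧ ((L = fun ξ => ξ j + ξ k) ∨ L = fun ξ => ξ j - ξ k)}

/-- Exponential damping factor `e^{-c·l·⟨α,ρ⟩}`. -/
def damp (n : ℕ) (c : ℝ) (l : ℕ) (α : Fin n → ℤ) : ℂ :=
  Complex.exp (((-(c * (l : ℝ) * ((rp α : ℤ) : ℝ))) : ℝ) : ℂ)

/-- RHS of the (rescaled) Calogero–Sutherland Harish-Chandra recurrence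
`∑_{α ∈ R₊} ∑_{l ≥ 1} l e^{-c l ⟨α,ρ⟩} a^{cs}_α(k) a_{ν - lα}` (a finite sum since the
terms with `l > ⟨ν,ρ⟩` vanish). -/
def csRHS (k : ℂ × ℂ × ℂ) (c : ℝ) (a : (Fin n → ℤ) → ℂ) (ν : Fin n → ℤ) : ℂ :=
  ∑ l ∈ Finset.Icc 1 (rp ν).toNat, (l : ℂ) *
    ((∑ j : Fin n, damp n c l (eZ n (j : ℕ)) * (k.2.1 * (k.2.1 + 2 * k.2.2 - 1)) *
        a (ν - l • eZ n (j : ℕ)))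
      + (∑ j : Fin n, damp n c l (2 • eZ n (j : ℕ)) * (4 * k.2.2 * (k.2.2 - 1)) *
          a (ν - l • (2 • eZ n (j : ℕ))))
      + ∑ j : Fin n, ∑ j' ∈ Finset.Ioi j,
          (damp n c l (eZ n (j : ℕ) + eZ n (j' : ℕ)) * (2 * k.1 * (k.1 - 1)) *
              a (ν - l • (eZ n (j : ℕ) + eZ n (j' : ℕ)))
            + damp n c l (eZ n (j : ℕ) - eZ n (j' : ℕ)) * (2 * k.1 * (k.1 - 1)) *
                a (ν - l • (eZ n (j : ℕ) - eZ n (j' : ℕ)))))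

/-- `a` is the family of Calogero–Sutherland Harish-Chandra coefficients `ν ↦ a^{cs}_ν(ξ;k)`. -/
def IsHCcs (k : ℂ × ℂ × ℂ) (ξ : Fin n → ℂ) (a : (Fin n → ℤ) → ℂ) : Prop :=
  a 0 = 1 ∧ (∀ ν, ¬ dominant ν → a ν = 0) ∧
    ∀ ν, dominant ν → ν ≠ 0 → pc (zc ν - 2 • ξ) (zc ν) * a ν = csRHS k 0 a ν

/-- `a` is the family of rescaled coefficients `ν ↦ â^{cs}_ν(ξ;k)` (with damping `c` and
initial value `Δval`). -/
def IsHCcsResc (k : ℂ × ℂ × ℂ) (c : ℝ) (Δval : ℂ) (ξ : Fin n → ℂ)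
    (a : (Fin n → ℤ) → ℂ) : Prop :=
  a 0 = Δval ∧ (∀ ν, ¬ dominant ν → a ν = 0) ∧
    ∀ ν, dominant ν → ν ≠ 0 → pc (zc ν - 2 • ξ) (zc ν) * a ν = csRHS k c a ν

/-- The open Weyl chamber `𝔸ⁿ = {x ∈ ℝⁿ ∣ x₁ > x₂ > ⋯ > xₙ > 0}`. -/
def Achamber (n : ℕ) : Set (Fin n → ℝ) :=
  {x | (∀ j k : Fin n, j < k → x k < x j) ∧ ∀ j, 0 < x j}

/-- The coupling parameters `k^{(c)} = (k₀^{(c)}, 2g, k₂^{(c)})` with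
`k₀^{(c)}(k₀^{(c)}-1) = e^c`, `k₂^{(c)}(k₂^{(c)}-1) = e^{2c}/16`, `k₀^{(c)}, k₂^{(c)} > 0`. -/
def kParam (g : ℂ) (c : ℝ) : ℂ × ℂ × ℂ :=
  ((((1 + Real.sqrt (1 + 4 * Real.exp c)) / 2 : ℝ) : ℂ), 2 * g,
    (((1 + Real.sqrt (1 + Real.exp c ^ 2 / 4)) / 2 : ℝ) : ℂ))

/-- The Calogero–Sutherland `c`-function `C^{cs}(ξ;k)`. -/
def Ccs (k : ℂ × ℂ × ℂ) (ξ : Fin n → ℂ) : ℂ :=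
  (∏ j, Complex.Gamma (2 * ξ j) * Complex.Gamma (k.2.1 / 2 + ξ j) /
      (Complex.Gamma (k.2.1 + 2 * ξ j) * Complex.Gamma (k.2.1 / 2 + k.2.2 + ξ j))) *
    ∏ j, ∏ k' ∈ Finset.Ioi j,
      Complex.Gamma (ξ j + ξ k') * Complex.Gamma (ξ j - ξ k') /
        (Complex.Gamma (k.1 + ξ j + ξ k') * Complex.Gamma (k.1 + ξ j - ξ k'))

/-- The normalization constant `γ(k)`. -/
def gammaNorm (n : ℕ) (k : ℂ × ℂ × ℂ) : ℂ :=
  Complex.Gamma k.1 ^ (n * (n - 1)) *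
    (Complex.Gamma k.2.1 * Complex.Gamma (k.2.1 / 2 + k.2.2) /
      (Complex.Gamma (k.2.1 / 2) * Complex.Gamma (1 / 2 + k.2.1 / 2))) ^ n

/-! For `ν ≥ 0` each coordinate `νⱼ` is a difference of two partial sums lying in
`[0, ⟨ν,ρ⟩]`, so `|νⱼ| ≤ ⟨ν,ρ⟩`; conversely `⟨ν,ρ⟩² ≤ n³ ∑ νⱼ²` by Cauchy–Schwarz. Since
`Re ⟨ν-2ξ,ν⟩ ≥ ∑ νⱼ² - 2‖ξ‖ ∑ |νⱼ|`, on the bounded set `K` the quadratic term wins as soon as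
`⟨ν,ρ⟩` exceeds a constant `R`. The finitely many `ν > 0` with `⟨ν,ρ⟩ ≤ R` are handled by
compactness: `ξ ↦ ⟨ν-2ξ,ν⟩` is continuous and nonvanishing on `K ⊆ 𝕌ⁿ`. -/

lemma rp_eq_sum_partialSums (ν : Fin n → ℤ) :
    rp ν = ∑ k : Fin n, ∑ j ∈ Iic k, ν j := by
  calc rp ν = ∑ j : Fin n, ∑ _k ∈ Ici j, ν j := by
        refine sum_congr rfl fun j _ => ?_
        rw [sum_const, Fin.card_Ici, nsmul_eq_mul, Nat.cast_sub j.isLt.le]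
        ring
    _ = ∑ k : Fin n, ∑ j ∈ Iic k, ν j := sum_comm' (by simp)

lemma partialSum_le_rp {ν : Fin n → ℤ} (hν : dominant ν) (k : Fin n) :
    ∑ j ∈ Iic k, ν j ≤ rp ν := by
  rw [rp_eq_sum_partialSums]
  exact single_le_sum (fun i _ => hν i) (mem_univ k)

lemma rp_nonneg {ν : Fin n → ℤ} (hν : dominant ν) : 0 ≤ rp ν := by
  rw [rp_eq_sum_partialSums]
  exact sum_nonneg fun k _ => hν k

lemma sum_Iio_mem_Icc {ν : Fin n → ℤ} (hν : dominant ν) (j : Fin n) :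
    ∑ k ∈ Iio j, ν k ∈ Set.Icc 0 (rp ν) := by
  obtain ⟨_ | m, hm⟩ := j
  · have hempty : Iio (⟨0, hm⟩ : Fin n) = ∅ := by ext k; simp [Fin.lt_def]
    simpa [hempty] using rp_nonneg hν
  · have hIio : Iio (⟨m + 1, hm⟩ : Fin n) = Iic ⟨m, Nat.lt_of_succ_lt hm⟩ := by
      ext k; simp [Fin.lt_def, Fin.le_def]
    rw [hIio]
    exact ⟨hν _, partialSum_le_rp hν _⟩

lemma abs_le_rp {ν : Fin n → ℤ} (hν : dominant ν) (j : Fin n) : |ν j| ≤ rp ν := by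
  have hsplit : ∑ k ∈ Iic j, ν k = ν j + ∑ k ∈ Iio j, ν k := by
    rw [← Iio_insert, sum_insert (by simp)]
  have hIio := sum_Iio_mem_Icc hν j
  have hIic_nonneg := hν j
  have hIic_le := partialSum_le_rp hν j
  rw [abs_le]
  constructor <;> linarith [hIio.1, hIio.2]

lemma abs_rp_le (ν : Fin n → ℤ) : |rp ν| ≤ n * ∑ j, |ν j| := by
  calc |rp ν| ≤ ∑ j, |ν j * ((n : ℤ) - ((j : ℕ) : ℤ))| := abs_sum_le_sum_abs _ _
    _ ≤ ∑ j : Fin n, n * |ν j| := by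
        refine sum_le_sum fun j _ => ?_
        rw [abs_mul, mul_comm]
        refine mul_le_mul_of_nonneg_right (abs_le.mpr ⟨?_, ?_⟩) (abs_nonneg _) <;> omega
    _ = n * ∑ j, |ν j| := (mul_sum ..).symm

lemma rp_sq_le (ν : Fin n → ℤ) : (rp ν : ℝ) ^ 2 ≤ n ^ 3 * ∑ j, (ν j : ℝ) ^ 2 := by
  have hrp : |(rp ν : ℝ)| ≤ n * ∑ j, |(ν j : ℝ)| := by exact_mod_cast abs_rp_le ν
  have hCS : (∑ j, |(ν j : ℝ)|) ^ 2 ≤ n * ∑ j, (ν j : ℝ) ^ 2 := by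
    simpa using sq_sum_le_card_mul_sum_sq (s := univ) (f := fun j => |(ν j : ℝ)|)
  calc (rp ν : ℝ) ^ 2 = |(rp ν : ℝ)| ^ 2 := (sq_abs _).symm
    _ ≤ (n * ∑ j, |(ν j : ℝ)|) ^ 2 := by gcongr
    _ = n ^ 2 * (∑ j, |(ν j : ℝ)|) ^ 2 := by ring
    _ ≤ n ^ 2 * (n * ∑ j, (ν j : ℝ) ^ 2) := by gcongr
    _ = n ^ 3 * ∑ j, (ν j : ℝ) ^ 2 := by ring

lemma re_pairing (ξ : Fin n → ℂ) (ν : Fin n → ℤ) :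
    (pc (zc ν - 2 • ξ) (zc ν)).re = ∑ j, ((ν j : ℝ) ^ 2 - 2 * (ξ j).re * ν j) := by
  simp only [pc, Complex.re_sum]
  refine sum_congr rfl fun j _ => ?_
  simp [zc, Complex.mul_re]
  ring

lemma sum_sq_sub_le_norm_pairing {C : ℝ} {ξ : Fin n → ℂ} (hξ : ‖ξ‖ ≤ C) (ν : Fin n → ℤ) :
    ∑ j, (ν j : ℝ) ^ 2 - 2 * C * ∑ j, |(ν j : ℝ)| ≤ ‖pc (zc ν - 2 • ξ) (zc ν)‖ := by
  refine le_trans ?_ (Complex.re_le_norm _)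
  rw [re_pairing, mul_sum, ← sum_sub_distrib]
  refine sum_le_sum fun j _ => ?_
  have hre : |(ξ j).re| ≤ C := (Complex.abs_re_le_norm _).trans ((norm_le_pi_norm ξ j).trans hξ)
  have : (ξ j).re * ν j ≤ C * |(ν j : ℝ)| := by
    calc (ξ j).re * ν j ≤ |(ξ j).re| * |(ν j : ℝ)| := by rw [← abs_mul]; exact le_abs_self _
      _ ≤ C * |(ν j : ℝ)| := by gcongr
  linarith

lemma sum_abs_le_card_mul_rp {ν : Fin n → ℤ} (hν : dominant ν) :
    ∑ j, |(ν j : ℝ)| ≤ n * rp ν := by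
  calc ∑ j, |(ν j : ℝ)| ≤ ∑ _j : Fin n, (rp ν : ℝ) :=
        sum_le_sum fun j _ => by exact_mod_cast abs_le_rp hν j
    _ = n * rp ν := by simp

lemma rp_sq_le_mul_norm_pairing {C : ℝ} {ξ : Fin n → ℂ} (hξ : ‖ξ‖ ≤ C) {ν : Fin n → ℤ}
    (hν : dominant ν) (hlarge : 4 * C * ((n : ℝ) + 1) ^ 4 ≤ rp ν) :
    (rp ν : ℝ) ^ 2 ≤ 2 * ((n : ℝ) + 1) ^ 3 * ‖pc (zc ν - 2 • ξ) (zc ν)‖ := by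
  set D : ℝ := (n : ℝ) + 1
  set r : ℝ := (rp ν : ℝ)
  set S := ∑ j, (ν j : ℝ) ^ 2
  set A := ∑ j, |(ν j : ℝ)|
  have hC : 0 ≤ C := (norm_nonneg ξ).trans hξ
  have hr : 0 ≤ r := Int.cast_nonneg (rp_nonneg hν)
  have hS : 0 ≤ S := sum_nonneg fun j _ => sq_nonneg _
  have hnD : (n : ℝ) ≤ D := by linarith
  have hrS : r ^ 2 ≤ D ^ 3 * S :=
    (rp_sq_le ν).trans (by gcongr)
  have hAr : A ≤ D * r :=
    (sum_abs_le_card_mul_rp hν).trans (by gcongr)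
  have hCA : 4 * C * D ^ 4 * r ≤ r ^ 2 := by nlinarith
  calc r ^ 2 ≤ 2 * D ^ 3 * (S - 2 * C * A) := by
        nlinarith [mul_le_mul_of_nonneg_left hAr (by positivity : 0 ≤ 4 * C * D ^ 3)]
    _ ≤ 2 * D ^ 3 * ‖pc (zc ν - 2 • ξ) (zc ν)‖ := by
        gcongr; exact sum_sq_sub_le_norm_pairing hξ ν

lemma finite_setOf_dominant_rp_le (R : ℝ) :
    {ν : Fin n → ℤ | dominant ν ∧ (rp ν : ℝ) ≤ R}.Finite := by
  refine (Set.Finite.pi fun _ => Set.finite_Icc (-⌈R⌉) ⌈R⌉).subset fun ν hν j _ => ?_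
  have hR : rp ν ≤ ⌈R⌉ := Int.cast_le.mp (hν.2.trans (Int.le_ceil R))
  exact abs_le.mp ((abs_le_rp hν.1 j).trans hR)

lemma continuous_norm_pairing :
    Continuous fun p : (Fin n → ℂ) × (Fin n → ℤ) => ‖pc (zc p.2 - 2 • p.1) (zc p.2)‖ := by
  have hzc : Continuous fun p : (Fin n → ℂ) × (Fin n → ℤ) => zc p.2 :=
    (continuous_of_discreteTopology (f := zc)).comp continuous_snd
  unfold pc
  fun_prop

lemma exists_pos_le_norm_pairing {K : Set (Fin n → ℂ)} (hK : IsCompact K)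
    {T : Set (Fin n → ℤ)} (hT : T.Finite)
    (hne : ∀ ξ ∈ K, ∀ ν ∈ T, pc (zc ν - 2 • ξ) (zc ν) ≠ 0) :
    ∃ m > 0, ∀ ξ ∈ K, ∀ ν ∈ T, m ≤ ‖pc (zc ν - 2 • ξ) (zc ν)‖ := by
  obtain ⟨m, hm0, hm⟩ := (hK.prod hT.isCompact).exists_forall_le'
    continuous_norm_pairing.continuousOn (a := 0)
    fun p hp => norm_pos_iff.mpr (hne _ hp.1 _ hp.2)
  exact ⟨m, hm0, fun ξ hξ ν hν => hm (ξ, ν) ⟨hξ, hν⟩⟩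

theorem statement9_general (n : ℕ)
    (K : Set (Fin n → ℂ)) (hK : IsCompact K) (hKU : K ⊆ Uset n) :
    ∃ a : ℝ, 0 < a ∧ ∀ ξ ∈ K, ∀ ν : Fin n → ℤ, dominant ν →
      a * ((rp ν : ℝ)) ^ 2 ≤ ‖pc (zc ν - 2 • ξ) (zc ν)‖ := by
  obtain ⟨C, hC, hKC⟩ := hK.isBounded.exists_pos_norm_le
  set R : ℝ := 4 * C * ((n : ℝ) + 1) ^ 4
  obtain ⟨m, hm, hKm⟩ := exists_pos_le_norm_pairing hK
    (T := {ν | dominant ν ∧ ν ≠ 0 ∧ (rp ν : ℝ) ≤ R})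
    ((finite_setOf_dominant_rp_le R).subset fun ν hν => ⟨hν.1, hν.2.2⟩)
    fun ξ hξ ν hν => hKU hξ ν hν.1 hν.2.1
  refine ⟨min (1 / (2 * ((n : ℝ) + 1) ^ 3)) (m / R ^ 2), by positivity, fun ξ hξ ν hν => ?_⟩
  rcases eq_or_ne ν 0 with rfl | hν0
  · simp [rp]
  rcases le_total R (rp ν) with hlarge | hsmall
  · calc _ ≤ 1 / (2 * ((n : ℝ) + 1) ^ 3) * (rp ν : ℝ) ^ 2 := by gcongr; exact min_le_left ..
      _ ≤ ‖pc (zc ν - 2 • ξ) (zc ν)‖ := by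
        rw [one_div_mul_eq_div, div_le_iff₀ (by positivity), mul_comm]
        exact rp_sq_le_mul_norm_pairing (hKC ξ hξ) hν hlarge
  · have hrp : (0 : ℝ) ≤ rp ν := Int.cast_nonneg (rp_nonneg hν)
    calc _ ≤ m / R ^ 2 * R ^ 2 := by gcongr; exact min_le_right ..
      _ = m := div_mul_cancel₀ m (by positivity)
      _ ≤ ‖pc (zc ν - 2 • ξ) (zc ν)‖ := hKm ξ hξ ν ⟨hν, hν0, hsmall⟩

/-- On every compact `K ⊆ 𝕌ⁿ` there is a uniform lower bound
`|⟨ν-2ξ,ν⟩| ≥ a ⟨ν,ρ⟩²` for all `ν ≥ 0`. -/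
theorem statement9 (n : ℕ) (hn : 1 ≤ n)
    (K : Set (Fin n → ℂ)) (hK : IsCompact K) (hKU : K ⊆ Uset n) :
    ∃ a : ℝ, 0 < a ∧ ∀ ξ ∈ K, ∀ ν : Fin n → ℤ, dominant ν →
      a * ((rp ν : ℝ)) ^ 2 ≤ ‖pc (zc ν - 2 • ξ) (zc ν)‖ :=
  statement9_general n K hK hKU

end TodaBC
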